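/- Let G be a connected claw-free cubic multigraph different from K4 admitting a desired bisection. Then V(G) can be partitioned into vertex-disjoint diamonds, triangles, trumpets, and digons, and the number of monochromatic edges of the desired bisection equals k + (|V(G)| - 4k - 2p)/3 = (|V(G)| - k - 2p)/3, where k is the number of diamonds and p the number of digons of G. -/

import Mathlib

/-- A multigraph on vertex set `V`: a symmetric edge-multiplicity function with no loops. -/
structure Multigraph (V : Type*) where
  mult : V → V → ℕ
  symm : ∀ u v, mult u v = mult v u
  loopless : ∀ v, mult v v = 0

namespace Multigraph

variable {V : Type*}

/-- Adjacency: distinct vertices joined by at least one edge. -/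
def Adj (G : Multigraph V) (u v : V) : Prop := u ≠ v ∧ 0 < G.mult u v

/-- The underlying simple graph. -/
def toSimple (G : Multigraph V) : SimpleGraph V where
  Adj u v := u ≠ v ∧ 0 < G.mult u v
  symm := ⟨fun u v h => ⟨h.1.symm, by rw [G.symm v u]; exact h.2⟩⟩
  loopless := ⟨fun v h => h.1 rfl⟩

def Connected (G : Multigraph V) : Prop := G.toSimple.Connected

section Fin
variable [Fintype V] [DecidableEq V]

/-- The degree of a vertex, counting edge multiplicities. -/
def degree (G : Multigraph V) (v : V) : ℕ := ∑ u, G.mult v u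

def IsCubic (G : Multigraph V) : Prop := ∀ v, G.degree v = 3

end Fin

variable [DecidableEq V]

/-- No induced claw `K_{1,3}` (centre `c`, leaves `a b d`). -/
def IsClawFree (G : Multigraph V) : Prop :=
  ¬ ∃ c a b d : V, c ≠ a ∧ c ≠ b ∧ c ≠ d ∧ a ≠ b ∧ a ≠ d ∧ b ≠ d ∧
      G.mult c a = 1 ∧ G.mult c b = 1 ∧ G.mult c d = 1 ∧
      G.mult a b = 0 ∧ G.mult a d = 0 ∧ G.mult b d = 0

/-- An induced triangle (cycle of length three, all sides simple edges). -/
def IsTriangle (G : Multigraph V) (a b c : V) : Prop :=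
  a ≠ b ∧ a ≠ c ∧ b ≠ c ∧ G.mult a b = 1 ∧ G.mult a c = 1 ∧ G.mult b c = 1

/-- A trumpet: a triangle whose side `ab` is a multiple edge. -/
def IsTrumpet (G : Multigraph V) (a b c : V) : Prop :=
  a ≠ b ∧ a ≠ c ∧ b ≠ c ∧ G.mult a b = 2 ∧ G.mult a c = 1 ∧ G.mult b c = 1

/-- A digon: two vertices joined by parallel edges. -/
def IsDigon (G : Multigraph V) (u v : V) : Prop := u ≠ v ∧ 2 ≤ G.mult u v

/-- A diamond: an induced `K₄` minus the edge `ad`. -/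
def IsDiamond (G : Multigraph V) (a b c d : V) : Prop :=
  a ≠ b ∧ a ≠ c ∧ a ≠ d ∧ b ≠ c ∧ b ≠ d ∧ c ≠ d ∧
  G.mult a d = 0 ∧ G.mult a b = 1 ∧ G.mult a c = 1 ∧ G.mult b c = 1 ∧
  G.mult b d = 1 ∧ G.mult c d = 1

/-- The vertex sets of the diamonds of `G`. -/
def diamondSets (G : Multigraph V) : Set (Finset V) :=
  {s | ∃ a b c d, s = {a, b, c, d} ∧ G.IsDiamond a b c d}

/-- The number of diamonds of `G`. -/
noncomputable def diamondCount (G : Multigraph V) : ℕ := G.diamondSets.ncard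

/-- The vertex sets of the digons of `G` that are not the multiple side of a trumpet. -/
def digonSets (G : Multigraph V) : Set (Finset V) :=
  {s | ∃ u v, s = {u, v} ∧ G.IsDigon u v ∧ ∀ w, ¬ G.IsTrumpet u v w}

/-- The number of digons of `G` (not counting those inside trumpets). -/
noncomputable def digonCount (G : Multigraph V) : ℕ := G.digonSets.ncard

/-- `G` is (isomorphic to) the simple complete graph `K₄`. -/
def IsK4 (G : Multigraph V) : Prop :=
  Nonempty (G.toSimple ≃g (⊤ : SimpleGraph (Fin 4))) ∧ ∀ u v, G.mult u v ≤ 1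

section Bisection
variable [Fintype V]

/-- A bisection: the two parts `B` and `Bᶜ` have the same size. -/
def IsBisection (G : Multigraph V) (B : Finset V) : Prop := B.card = Bᶜ.card

/-- The number of monochromatic edges inside the part `B` (with multiplicity). -/
def monoEdges (G : Multigraph V) (B : Finset V) : ℕ :=
  (∑ u ∈ B, ∑ v ∈ B, G.mult u v) / 2

/-- The total number of monochromatic edges of the bisection `(B, Bᶜ)`. -/
def epsilon (G : Multigraph V) (B : Finset V) : ℕ := G.monoEdges B + G.monoEdges Bᶜ

/-- The simple graph induced by `G` on the part `B`. -/
def inducedSimple (G : Multigraph V) (B : Finset V) : SimpleGraph V where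
  Adj u v := u ≠ v ∧ u ∈ B ∧ v ∈ B ∧ 0 < G.mult u v
  symm := ⟨fun u v h => ⟨h.1.symm, h.2.2.1, h.2.1, by rw [G.symm v u]; exact h.2.2.2⟩⟩
  loopless := ⟨fun v h => h.1 rfl⟩

/-- Every monochromatic component inside `B` has at most `k` vertices. -/
def SmallComponents (G : Multigraph V) (B : Finset V) (k : ℕ) : Prop :=
  ∀ v ∈ B, {u | (G.inducedSimple B).Reachable v u}.ncard ≤ k

/-- A `k`-bisection. -/
def IsKBisection (G : Multigraph V) (B : Finset V) (k : ℕ) : Prop :=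
  G.IsBisection B ∧ G.SmallComponents B k ∧ G.SmallComponents Bᶜ k

/-- A desired bisection: (DB1) exactly one monochromatic edge per triangle, (DB2) every
monochromatic edge lies in a triangle, (DB3) exactly one monochromatic edge per diamond,
(DB4) no multiple edge is monochromatic. -/
def IsDesired (G : Multigraph V) (B : Finset V) : Prop :=
  G.IsBisection B ∧
  (∀ a b c, G.IsTriangle a b c →
    (({(a, b), (a, c), (b, c)} : Finset (V × V)).filter
      (fun e => e.1 ∈ B ↔ e.2 ∈ B)).card = 1) ∧
  (∀ u v, G.Adj u v → (u ∈ B ↔ v ∈ B) → ∃ w, G.IsTriangle u v w) ∧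
  (∀ a b c d, G.IsDiamond a b c d →
    (({(a, b), (a, c), (b, c), (b, d), (c, d)} : Finset (V × V)).filter
      (fun e => e.1 ∈ B ↔ e.2 ∈ B)).card = 1) ∧
  (∀ u v, 2 ≤ G.mult u v → ¬ (u ∈ B ↔ v ∈ B))

end Bisection

end Multigraph

namespace Multigraph

variable {V : Type*} [DecidableEq V]

/-- Delete all edges between `x` and `y`. -/
def deleteEdge (G : Multigraph V) (x y : V) : Multigraph V where
  mult u v := if (u = x ∧ v = y) ∨ (u = y ∧ v = x) then 0 else G.mult u v
  symm := by
    intro u v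
    have hsy := G.symm u v
    by_cases h : (u = x ∧ v = y) ∨ (u = y ∧ v = x)
    · have h' : (v = x ∧ u = y) ∨ (v = y ∧ u = x) := by tauto
      simp [h, h']
    · have h' : ¬ ((v = x ∧ u = y) ∨ (v = y ∧ u = x)) := by tauto
      simp [h, h', hsy]
  loopless := by
    intro v
    by_cases h : (v = x ∧ v = y) ∨ (v = y ∧ v = x) <;> simp [h, G.loopless]

/-- The diamond reduction: delete the diamond vertices `a b c d` and add one new edge
between the outside neighbours `x` and `y`. -/
def diamondReduce (G : Multigraph V) (a b c d x y : V) :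
    Multigraph {v : V // v ∉ ({a, b, c, d} : Finset V)} where
  mult u v := if u.1 ≠ v.1 ∧ ((u.1 = x ∧ v.1 = y) ∨ (u.1 = y ∧ v.1 = x))
    then G.mult u.1 v.1 + 1 else G.mult u.1 v.1
  symm := by
    intro u v
    have hsy := G.symm u.1 v.1
    by_cases h : u.1 ≠ v.1 ∧ ((u.1 = x ∧ v.1 = y) ∨ (u.1 = y ∧ v.1 = x))
    · have h' : v.1 ≠ u.1 ∧ ((v.1 = x ∧ u.1 = y) ∨ (v.1 = y ∧ u.1 = x)) := by tauto
      simp [h, h', hsy]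
    · have h' : ¬ (v.1 ≠ u.1 ∧ ((v.1 = x ∧ u.1 = y) ∨ (v.1 = y ∧ u.1 = x))) := by tauto
      simp [h, h', hsy]
  loopless := by
    intro v
    simp [G.loopless]

/-- A ring of two diamonds: two vertex-disjoint diamonds covering all of `V`, joined
cyclically by two edges between their degree-2 vertices. -/
def IsRingOfTwoDiamonds (G : Multigraph V) : Prop :=
  ∃ a₁ b₁ c₁ d₁ a₂ b₂ c₂ d₂ : V,
    ([a₁, b₁, c₁, d₁, a₂, b₂, c₂, d₂] : List V).Nodup ∧
    (∀ v : V, v ∈ [a₁, b₁, c₁, d₁, a₂, b₂, c₂, d₂]) ∧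
    G.IsDiamond a₁ b₁ c₁ d₁ ∧ G.IsDiamond a₂ b₂ c₂ d₂ ∧
    G.mult d₁ a₂ = 1 ∧ G.mult d₂ a₁ = 1

end Multigraph

/-!
Under a desired bisection `G` has no trumpet: the multiple side of a trumpet is bichromatic, so
one of its simple sides is monochromatic, yet that side lies in no triangle. By claw-freeness every
vertex without a multiple edge then lies on a triangle, so the diamonds, the triangles contained
in no diamond and the digons cover `V`. Since `G` is a connected cubic graph other than `K₄`, two
distinct triangles through a vertex share an edge and span a diamond; hence these blocks are
pairwise disjoint. Every monochromatic edge lies on a triangle, hence inside a block, and a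
diamond or a triangle carries exactly one monochromatic edge, a digon none. With `t` triangle
blocks, `|V| = 4k + 3t + 2p` and `ε = k + t`, so `3ε + k + 2p = |V|`.
-/

namespace Multigraph

open Finset

variable {V : Type*} {G : Multigraph V}

section Symmetry

variable {a b c d : V}

lemma IsTriangle.swap_left (h : G.IsTriangle a b c) : G.IsTriangle b a c :=
  let ⟨hab, hac, hbc, mab, mac, mbc⟩ := h
  ⟨hab.symm, hbc, hac, (G.symm b a).trans mab, mbc, mac⟩

lemma IsTriangle.swap_right (h : G.IsTriangle a b c) : G.IsTriangle a c b :=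
  let ⟨hab, hac, hbc, mab, mac, mbc⟩ := h
  ⟨hac, hab, hbc.symm, mac, mab, (G.symm c b).trans mbc⟩

lemma IsTriangle.exists_rotate [DecidableEq V] {v : V} (h : G.IsTriangle a b c)
    (hv : v ∈ ({a, b, c} : Finset V)) :
    ∃ q r, G.IsTriangle v q r ∧ ({a, b, c} : Finset V) = {v, q, r} := by
  simp only [mem_insert, mem_singleton] at hv
  rcases hv with rfl | rfl | rfl
  · exact ⟨b, c, h, rfl⟩
  · exact ⟨a, c, h.swap_left, insert_comm _ _ _⟩
  · exact ⟨a, b, h.swap_right.swap_left, by ext; simp; tauto⟩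

lemma IsDiamond.swap_mid (h : G.IsDiamond a b c d) : G.IsDiamond a c b d :=
  let ⟨hab, hac, had, hbc, hbd, hcd, mad, mab, mac, mbc, mbd, mcd⟩ := h
  ⟨hac, hab, had, hbc.symm, hcd, hbd, mad, mac, mab, (G.symm c b).trans mbc, mcd, mbd⟩

lemma IsDiamond.swap_ends (h : G.IsDiamond a b c d) : G.IsDiamond d b c a :=
  let ⟨hab, hac, had, hbc, hbd, hcd, mad, mab, mac, mbc, mbd, mcd⟩ := h
  ⟨hbd.symm, hcd.symm, had.symm, hbc, hab.symm, hac.symm, (G.symm d a).trans mad,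
    (G.symm d b).trans mbd, (G.symm d c).trans mcd, mbc, (G.symm b a).trans mab,
    (G.symm c a).trans mac⟩

lemma IsDiamond.isTriangle_left (h : G.IsDiamond a b c d) : G.IsTriangle a b c :=
  let ⟨hab, hac, _, hbc, _, _, _, mab, mac, mbc, _, _⟩ := h
  ⟨hab, hac, hbc, mab, mac, mbc⟩

lemma IsDiamond.isTriangle_right (h : G.IsDiamond a b c d) : G.IsTriangle b c d :=
  h.swap_ends.isTriangle_left.swap_left.swap_right

lemma IsDiamond.exists_isTriangle_of_mem [DecidableEq V] (h : G.IsDiamond a b c d) {v : V}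
    (hv : v ∈ ({a, b, c, d} : Finset V)) : ∃ q r, G.IsTriangle v q r := by
  simp only [mem_insert, mem_singleton] at hv
  rcases hv with rfl | rfl | rfl | rfl
  · exact ⟨_, _, h.isTriangle_left⟩
  · exact ⟨_, _, h.isTriangle_right⟩
  · exact ⟨_, _, h.isTriangle_right.swap_left⟩
  · exact ⟨_, _, h.swap_ends.isTriangle_left⟩

lemma IsTriangle.card_eq [DecidableEq V] (h : G.IsTriangle a b c) :
    ({a, b, c} : Finset V).card = 3 := by
  obtain ⟨hab, hac, hbc, -⟩ := h
  simp [card_insert_of_notMem, *]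

lemma IsDiamond.card_eq [DecidableEq V] (h : G.IsDiamond a b c d) :
    ({a, b, c, d} : Finset V).card = 4 := by
  obtain ⟨hab, hac, had, hbc, hbd, hcd, -⟩ := h
  simp [card_insert_of_notMem, *]

end Symmetry

section Cubic

variable [Fintype V]

lemma sum_mult_le (hc : G.IsCubic) (v : V) (s : Finset V) : ∑ w ∈ s, G.mult v w ≤ 3 :=
  (sum_le_sum_of_subset (subset_univ s)).trans_eq (hc v)

lemma mult_eq_zero_of_sum_eq_three [DecidableEq V] (hc : G.IsCubic) {v w : V} {s : Finset V}
    (hs : ∑ u ∈ s, G.mult v u = 3) (hw : w ∉ s) : G.mult v w = 0 := by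
  have := sum_mult_le hc v (insert w s)
  rw [sum_insert hw, hs] at this
  omega

variable {v q r x : V}

lemma mult_le_one_of_simple_nbrs [DecidableEq V] (hc : G.IsCubic) (hqr : q ≠ r)
    (hq : G.mult v q = 1) (hr : G.mult v r = 1) (x : V) : G.mult v x ≤ 1 := by
  by_cases hx : x ∈ ({q, r} : Finset V)
  · simp only [mem_insert, mem_singleton] at hx
    rcases hx with rfl | rfl <;> omega
  · have := sum_mult_le hc v (insert x {q, r})
    rw [sum_insert hx, sum_pair hqr] at this
    omega

lemma IsTriangle.mult_le_one [DecidableEq V] (hc : G.IsCubic) (h : G.IsTriangle v q r)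
    (x : V) : G.mult v x ≤ 1 :=
  mult_le_one_of_simple_nbrs hc h.2.2.1 h.2.2.2.1 h.2.2.2.2.1 x

lemma mult_eq_zero_of_simple_nbrs [DecidableEq V] (hc : G.IsCubic) (hqr : q ≠ r) (hqx : q ≠ x)
    (hrx : r ≠ x) (hq : G.mult v q = 1) (hr : G.mult v r = 1) (hx : G.mult v x = 1) {w : V}
    (hw : w ∉ ({q, r, x} : Finset V)) : G.mult v w = 0 :=
  mult_eq_zero_of_sum_eq_three hc (by rw [sum_insert (by simp [hqr, hqx]), sum_pair hrx]; omega) hw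

lemma exists_third_simple_nbr [DecidableEq V] (hc : G.IsCubic) (hqr : q ≠ r)
    (hq : G.mult v q = 1) (hr : G.mult v r = 1) : ∃ x, x ≠ q ∧ x ≠ r ∧ G.mult v x = 1 := by
  have hrest : ∑ w ∈ univ \ {q, r}, G.mult v w = 1 := by
    have := sum_sdiff (f := G.mult v) (subset_univ {q, r})
    rw [sum_pair hqr, hq, hr] at this
    have := hc v
    unfold degree at this
    omega
  obtain ⟨x, hx, hx0⟩ := exists_ne_zero_of_sum_ne_zero (hrest.trans_ne one_ne_zero)
  simp only [mem_sdiff, mem_univ, mem_insert, mem_singleton, true_and, not_or] at hx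
  exact ⟨x, hx.1, hx.2, le_antisymm (mult_le_one_of_simple_nbrs hc hqr hq hr x) (by omega)⟩

lemma eq_of_two_le_mult (hc : G.IsCubic) {p p' : V} (hp : 2 ≤ G.mult v p)
    (hp' : 2 ≤ G.mult v p') : p = p' := by
  classical
  by_contra hne
  have := sum_mult_le hc v {p, p'}
  rw [sum_pair hne] at this
  omega

lemma isK4_of_card_eq_four [DecidableEq V] (hconn : G.Connected) (hc : G.IsCubic)
    {s : Finset V} (hs : s.card = 4) (hadj : ∀ u ∈ s, ∀ w ∈ s, u ≠ w → G.mult u w = 1) :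
    G.IsK4 := by
  have hclosed : ∀ u w, G.toSimple.Adj u w → u ∈ s → w ∈ s := by
    intro u w huw hu
    by_contra hw
    have hsum : ∑ x ∈ s.erase u, G.mult u x = 3 := by
      rw [sum_congr rfl fun x hx => hadj u hu x (mem_of_mem_erase hx) (ne_of_mem_erase hx).symm,
        sum_const, card_erase_of_mem hu, hs, smul_eq_mul, mul_one]
    exact huw.2.ne' (mult_eq_zero_of_sum_eq_three hc hsum fun h => hw (mem_of_mem_erase h))
  obtain ⟨u, hu⟩ : s.Nonempty := card_pos.1 (by omega)
  have hall : ∀ w, w ∈ s := fun w => by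
    induction (SimpleGraph.reachable_iff_reflTransGen u w).1 (hconn.preconnected u w) with
    | refl => exact hu
    | tail _ hadj ih => exact hclosed _ _ hadj ih
  have hmult : ∀ u w, u ≠ w → G.mult u w = 1 := fun u w h => hadj u (hall u) w (hall w) h
  have htop : G.toSimple = ⊤ := by
    ext u w
    exact ⟨fun h => h.1, fun h => ⟨h, (hmult u w h).symm ▸ one_pos⟩⟩
  have hcard : Fintype.card V = 4 := by rw [← card_univ, ← hs, eq_univ_iff_forall.2 hall]
  refine ⟨htop ▸ ⟨SimpleGraph.Iso.completeGraph (Fintype.equivFinOfCardEq hcard)⟩, fun u w => ?_⟩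
  by_cases h : u = w
  · simp [h, G.loopless]
  · exact (hmult u w h).le

/-- If `r` and `x` were adjacent, `{v, q, r, x}` would be a `K₄` component of `G`. -/
lemma isDiamond_of_isTriangle_of_isTriangle [DecidableEq V] (hconn : G.Connected)
    (hc : G.IsCubic) (hK4 : ¬ G.IsK4) (h₁ : G.IsTriangle v q r) (h₂ : G.IsTriangle v q x)
    (hrx : r ≠ x) : G.IsDiamond r v q x := by
  have hle := h₁.swap_right.swap_left.mult_le_one hc x
  obtain ⟨hvq, hvr, hqr, mvq, mvr, mqr⟩ := h₁
  obtain ⟨-, hvx, hqx, -, mvx, mqx⟩ := h₂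
  have mrx : G.mult r x = 0 := by
    refine (Nat.le_one_iff_eq_zero_or_eq_one.1 hle).resolve_right fun mrx => hK4 ?_
    refine isK4_of_card_eq_four hconn hc (s := {v, q, r, x})
      (by simp [card_insert_of_notMem, *]) ?_
    simp only [mem_insert, mem_singleton]
    rintro a (rfl | rfl | rfl | rfl) b (rfl | rfl | rfl | rfl) hab <;>
      first | exact absurd rfl hab | assumption | (rw [G.symm]; assumption)
  exact ⟨hvr.symm, hqr.symm, hrx, hvq, hvx, hqx, mrx, (G.symm r v).trans mvr,
    (G.symm r q).trans mqr, mvq, mvx, mqx⟩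

lemma IsDesired.not_isTrumpet [DecidableEq V] (hc : G.IsCubic) {B : Finset V}
    (hdes : G.IsDesired B) (a b c : V) : ¬ G.IsTrumpet a b c := by
  rintro ⟨hab, hac, hbc, mab, mac, mbc⟩
  obtain ⟨-, -, hmono, -, hmulti⟩ := hdes
  have hsplit := hmulti a b mab.ge
  by_cases hca : a ∈ B ↔ c ∈ B
  · obtain ⟨w, hw⟩ := hmono a c ⟨hac, by omega⟩ hca
    have := hw.mult_le_one hc b
    omega
  · obtain ⟨w, hw⟩ := hmono b c ⟨hbc, by omega⟩ (by tauto)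
    have := hw.mult_le_one hc a
    rw [G.symm] at this
    omega

end Cubic

section Diamond

variable [Fintype V] [DecidableEq V] {a b c d : V}

lemma IsDiamond.mult_mid_eq_zero (hc : G.IsCubic) (h : G.IsDiamond a b c d) {w : V}
    (hw : w ∉ ({a, c, d} : Finset V)) : G.mult b w = 0 :=
  let ⟨_, hac, had, _, _, hcd, _, mab, _, mbc, mbd, _⟩ := h
  mult_eq_zero_of_simple_nbrs hc hac had hcd ((G.symm b a).trans mab) mbc mbd hw

lemma IsDiamond.eq_or_eq_of_isTriangle (hc : G.IsCubic) (h : G.IsDiamond a b c d) {q r : V}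
    (ht : G.IsTriangle a q r) : q = b ∨ q = c := by
  obtain ⟨-, -, -, hbc, -, -, mad, mab, mac, -, -, -⟩ := id h
  obtain ⟨t, htb, htc, mat⟩ := exists_third_simple_nbr hc hbc mab mac
  have hta : t ≠ a := by rintro rfl; simp [G.loopless] at mat
  have htd : t ≠ d := by rintro rfl; omega
  have hnbr : ∀ w, G.mult a w ≠ 0 → w = b ∨ w = c ∨ w = t := fun w hw => by
    by_contra hne
    simp only [not_or] at hne
    exact hw (mult_eq_zero_of_simple_nbrs hc hbc htb.symm htc.symm mab mac mat
      (by simp [hne.1, hne.2.1, hne.2.2]))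
  have mtb := (G.symm t b).trans (h.mult_mid_eq_zero hc (by simp [hta, htc, htd]))
  have mtc := (G.symm t c).trans (h.swap_mid.mult_mid_eq_zero hc (by simp [hta, htb, htd]))
  obtain ⟨-, -, hqr, maq, mar, mqr⟩ := ht
  rcases hnbr q (by omega) with hq | hq | rfl
  · exact Or.inl hq
  · exact Or.inr hq
  · rcases hnbr r (by omega) with rfl | rfl | rfl
    · omega
    · omega
    · exact absurd rfl hqr

lemma IsDiamond.mem_of_isTriangle (hc : G.IsCubic) (h : G.IsDiamond a b c d) {p q r : V}
    (ht : G.IsTriangle p q r) (hp : p ∈ ({a, b, c, d} : Finset V)) :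
    q ∈ ({a, b, c, d} : Finset V) := by
  have mpq := ht.2.2.2.1
  simp only [mem_insert, mem_singleton] at hp ⊢
  rcases hp with rfl | rfl | rfl | rfl
  · rcases h.eq_or_eq_of_isTriangle hc ht with rfl | rfl <;> simp
  · by_contra! hq
    have := h.mult_mid_eq_zero hc (w := q) (by simp [hq.1, hq.2.2.1, hq.2.2.2])
    omega
  · by_contra! hq
    have := h.swap_mid.mult_mid_eq_zero hc (w := q) (by simp [hq.1, hq.2.1, hq.2.2.2])
    omega
  · rcases h.swap_ends.eq_or_eq_of_isTriangle hc ht with rfl | rfl <;> simp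

lemma IsDiamond.subset_of_isTriangle (hc : G.IsCubic) (h : G.IsDiamond a b c d) {p q r v : V}
    (ht : G.IsTriangle p q r) (hv : v ∈ ({p, q, r} : Finset V))
    (hvD : v ∈ ({a, b, c, d} : Finset V)) : ({p, q, r} : Finset V) ⊆ {a, b, c, d} := by
  obtain ⟨q', r', ht', heq⟩ := ht.exists_rotate hv
  rw [heq, insert_subset_iff, insert_subset_iff, singleton_subset_iff]
  exact ⟨hvD, h.mem_of_isTriangle hc ht' hvD, h.mem_of_isTriangle hc ht'.swap_right hvD⟩

lemma IsDiamond.eq_of_mem (hc : G.IsCubic) (h : G.IsDiamond a b c d) {a' b' c' d' v : V}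
    (h' : G.IsDiamond a' b' c' d') (hv : v ∈ ({a, b, c, d} : Finset V))
    (hv' : v ∈ ({a', b', c', d'} : Finset V)) :
    ({a, b, c, d} : Finset V) = {a', b', c', d'} := by
  have hunion : ({a, b, c, d} : Finset V) = {a, b, c} ∪ {b, c, d} := by
    ext; simp only [mem_insert, mem_singleton, mem_union]; tauto
  have hb : b ∈ ({a', b', c', d'} : Finset V) := by
    rw [hunion, mem_union] at hv
    rcases hv with hv | hv
    · exact h'.subset_of_isTriangle hc h.isTriangle_left hv hv' (by simp)
    · exact h'.subset_of_isTriangle hc h.isTriangle_right hv hv' (by simp)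
  refine eq_of_subset_of_card_le ?_ (h'.card_eq.trans h.card_eq.symm).le
  rw [hunion]
  exact union_subset (h'.subset_of_isTriangle hc h.isTriangle_left (by simp) hb)
    (h'.subset_of_isTriangle hc h.isTriangle_right (by simp) hb)

end Diamond

section Blocks

variable [DecidableEq V]

def bareTriangleSets (G : Multigraph V) : Set (Finset V) :=
  {s | (∃ a b c, s = {a, b, c} ∧ G.IsTriangle a b c) ∧ ∀ t ∈ G.diamondSets, ¬ s ⊆ t}

def blockSets (G : Multigraph V) : Set (Finset V) :=
  G.diamondSets ∪ G.bareTriangleSets ∪ G.digonSets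

lemma IsTriangle.exists_mem_blockSets {a b c : V} (h : G.IsTriangle a b c) :
    ∃ s ∈ G.blockSets, {a, b, c} ⊆ s := by
  by_cases hD : ∃ t ∈ G.diamondSets, {a, b, c} ⊆ t
  · obtain ⟨t, ht, hsub⟩ := hD
    exact ⟨t, Or.inl (Or.inl ht), hsub⟩
  · push Not at hD
    exact ⟨_, Or.inl (Or.inr ⟨⟨a, b, c, rfl, h⟩, hD⟩), subset_rfl⟩

lemma exists_isTriangle_of_mem {s : Finset V} (hs : s ∈ G.diamondSets ∪ G.bareTriangleSets)
    {v : V} (hv : v ∈ s) : ∃ q r, G.IsTriangle v q r := by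
  rcases hs with ⟨a, b, c, d, rfl, h⟩ | ⟨⟨a, b, c, rfl, h⟩, -⟩
  · exact h.exists_isTriangle_of_mem hv
  · obtain ⟨q, r, h', -⟩ := h.exists_rotate hv
    exact ⟨q, r, h'⟩

variable [Fintype V]

lemma exists_diamondSets_superset (hconn : G.Connected) (hc : G.IsCubic) (hK4 : ¬ G.IsK4)
    {v q r q' r' : V} (h : G.IsTriangle v q r) (h' : G.IsTriangle v q' r')
    (hne : ({v, q, r} : Finset V) ≠ {v, q', r'}) :
    ∃ t ∈ G.diamondSets, ({v, q, r} : Finset V) ⊆ t := by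
  obtain ⟨hvq, hvr, hqr, mvq, mvr, -⟩ := id h
  obtain ⟨-, -, hqr', mvq', mvr', -⟩ := id h'
  obtain ⟨x, hxq, hxr, mvx⟩ := exists_third_simple_nbr hc hqr mvq mvr
  have hnbr : ∀ w, G.mult v w = 1 → w = q ∨ w = r ∨ w = x := fun w hw => by
    by_contra! hne
    have := mult_eq_zero_of_simple_nbrs hc hqr hxq.symm hxr.symm mvq mvr mvx
      (w := w) (by simp [hne.1, hne.2.1, hne.2.2])
    omega
  have hdiamond : ∀ {q r : V}, G.IsTriangle v q r → G.IsTriangle v q x → r ≠ x →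
      ∃ t ∈ G.diamondSets, v ∈ t ∧ q ∈ t ∧ r ∈ t := fun h₁ h₂ hrx =>
    ⟨_, ⟨_, _, _, _, rfl, isDiamond_of_isTriangle_of_isTriangle hconn hc hK4 h₁ h₂ hrx⟩,
      by simp, by simp, by simp⟩
  suffices ∃ t ∈ G.diamondSets, v ∈ t ∧ q ∈ t ∧ r ∈ t by
    obtain ⟨t, ht, hv, hq, hr⟩ := this
    exact ⟨t, ht, by simp [insert_subset_iff, hv, hq, hr]⟩
  -- `{q', r'} ≠ {q, r}` inside the neighbourhood `{q, r, x}`: the triangles share `vq` or `vr`.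
  rcases hnbr q' mvq' with rfl | rfl | rfl <;> rcases hnbr r' mvr' with rfl | rfl | rfl
  all_goals first
    | exact absurd rfl hqr'
    | exact absurd rfl hne
    | exact absurd (by ext; simp only [mem_insert, mem_singleton]; tauto) hne
    | skip
  · exact hdiamond h h' hxr.symm
  · obtain ⟨t, ht, hv, hr, hq⟩ := hdiamond h.swap_right h' hxq.symm
    exact ⟨t, ht, hv, hq, hr⟩
  · exact hdiamond h h'.swap_right hxr.symm
  · obtain ⟨t, ht, hv, hr, hq⟩ := hdiamond h.swap_right h'.swap_right hxq.symm
    exact ⟨t, ht, hv, hq, hr⟩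

lemma eq_of_mem_bareTriangleSets (hconn : G.Connected) (hc : G.IsCubic) (hK4 : ¬ G.IsK4)
    {s t : Finset V} (hs : s ∈ G.bareTriangleSets) (ht : t ∈ G.bareTriangleSets) {v : V}
    (hvs : v ∈ s) (hvt : v ∈ t) : s = t := by
  obtain ⟨⟨a, b, c, rfl, h⟩, hbare⟩ := hs
  obtain ⟨⟨a', b', c', rfl, h'⟩, -⟩ := ht
  obtain ⟨q, r, hq, heq⟩ := h.exists_rotate hvs
  obtain ⟨q', r', hq', heq'⟩ := h'.exists_rotate hvt
  rw [heq, heq']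
  by_contra hne
  obtain ⟨D, hD, hsub⟩ := exists_diamondSets_superset hconn hc hK4 hq hq' hne
  exact hbare D hD (heq ▸ hsub)

lemma disjoint_of_mem_bareTriangleSets_of_mem_diamondSets (hc : G.IsCubic) {s t : Finset V}
    (hs : s ∈ G.bareTriangleSets) (ht : t ∈ G.diamondSets) : Disjoint s t := by
  obtain ⟨⟨a, b, c, rfl, h⟩, hbare⟩ := hs
  obtain ⟨a', b', c', d', rfl, h'⟩ := id ht
  exact disjoint_left.2 fun _ hv hv' => hbare _ ht (h'.subset_of_isTriangle hc h hv hv')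

lemma eq_of_mem_digonSets (hc : G.IsCubic) {s t : Finset V} (hs : s ∈ G.digonSets)
    (ht : t ∈ G.digonSets) {v : V} (hvs : v ∈ s) (hvt : v ∈ t) : s = t := by
  have key : ∀ {s}, s ∈ G.digonSets → v ∈ s → ∃ p, 2 ≤ G.mult v p ∧ s = {v, p} := by
    rintro _ ⟨a, b, rfl, ⟨-, hab⟩, -⟩ hv
    simp only [mem_insert, mem_singleton] at hv
    rcases hv with rfl | rfl
    · exact ⟨b, hab, rfl⟩
    · exact ⟨a, (G.symm v a).trans_ge hab, pair_comm _ _⟩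
  obtain ⟨p, hp, rfl⟩ := key hs hvs
  obtain ⟨p', hp', rfl⟩ := key ht hvt
  rw [eq_of_two_le_mult hc hp hp']

lemma eq_of_mem_blockSets (hconn : G.Connected) (hc : G.IsCubic) (hK4 : ¬ G.IsK4)
    {s t : Finset V} (hs : s ∈ G.blockSets) (ht : t ∈ G.blockSets) {v : V} (hvs : v ∈ s)
    (hvt : v ∈ t) : s = t := by
  have hdigon : ∀ {s t}, s ∈ G.diamondSets ∪ G.bareTriangleSets → t ∈ G.digonSets →
      v ∈ s → v ∈ t → False := by
    rintro s _ hs ⟨a, b, rfl, ⟨-, hab⟩, -⟩ hvs hvt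
    obtain ⟨q, r, h⟩ := exists_isTriangle_of_mem hs hvs
    simp only [mem_insert, mem_singleton] at hvt
    rcases hvt with rfl | rfl
    · have := h.mult_le_one hc b
      omega
    · have := h.mult_le_one hc a
      rw [G.symm] at this
      omega
  rcases hs with hs | hs <;> rcases ht with ht | ht
  · rcases hs with hs | hs <;> rcases ht with ht | ht
    · obtain ⟨a, b, c, d, rfl, h⟩ := hs
      obtain ⟨a', b', c', d', rfl, h'⟩ := ht
      exact h.eq_of_mem hc h' hvs hvt
    · exact absurd hvs
        (disjoint_left.1 (disjoint_of_mem_bareTriangleSets_of_mem_diamondSets hc ht hs) hvt)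
    · exact absurd hvt
        (disjoint_left.1 (disjoint_of_mem_bareTriangleSets_of_mem_diamondSets hc hs ht) hvs)
    · exact eq_of_mem_bareTriangleSets hconn hc hK4 hs ht hvs hvt
  · exact (hdigon hs ht hvs hvt).elim
  · exact (hdigon ht hs hvt hvs).elim
  · exact eq_of_mem_digonSets hc hs ht hvs hvt

lemma exists_three_simple_nbrs (hc : G.IsCubic) {v : V} (hv : ∀ u, G.mult v u ≤ 1) :
    ∃ a b c, a ≠ b ∧ a ≠ c ∧ b ≠ c ∧ G.mult v a = 1 ∧ G.mult v b = 1 ∧ G.mult v c = 1 := by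
  have hcard : (univ.filter (G.mult v · = 1)).card = 3 := by
    rw [card_filter, ← hc v]
    exact sum_congr rfl fun u _ => by have := hv u; split_ifs <;> omega
  obtain ⟨a, b, c, hab, hac, hbc, heq⟩ := card_eq_three.1 hcard
  have hmem : ∀ u ∈ ({a, b, c} : Finset V), G.mult v u = 1 := by
    intro u hu
    rw [← heq] at hu
    exact (mem_filter.1 hu).2
  exact ⟨a, b, c, hab, hac, hbc, hmem a (by simp), hmem b (by simp), hmem c (by simp)⟩

lemma isTriangle_of_mult_ne_zero (hc : G.IsCubic) (hT : ∀ a b c, ¬ G.IsTrumpet a b c)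
    {v a b : V} (hab : a ≠ b) (ha : G.mult v a = 1) (hb : G.mult v b = 1)
    (hab₀ : G.mult a b ≠ 0) : G.IsTriangle v a b := by
  have hva : v ≠ a := by rintro rfl; simp [G.loopless] at ha
  have hvb : v ≠ b := by rintro rfl; simp [G.loopless] at hb
  have hle := sum_mult_le hc a {v, b}
  rw [sum_pair hvb, G.symm a v, ha] at hle
  refine ⟨hva, hvb, hab, ha, hb, ?_⟩
  by_contra hne
  exact hT a b v ⟨hab, hva.symm, hvb.symm, by omega, (G.symm a v).trans ha, (G.symm b v).trans hb⟩

lemma exists_mem_blockSets (hclaw : G.IsClawFree) (hc : G.IsCubic)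
    (hT : ∀ a b c, ¬ G.IsTrumpet a b c) (v : V) : ∃ s ∈ G.blockSets, v ∈ s := by
  by_cases hmulti : ∃ p, 2 ≤ G.mult v p
  · obtain ⟨p, hp⟩ := hmulti
    have hvp : v ≠ p := by rintro rfl; simp [G.loopless] at hp
    exact ⟨{v, p}, Or.inr ⟨v, p, rfl, ⟨hvp, hp⟩, hT v p⟩, by simp⟩
  push Not at hmulti
  obtain ⟨a, b, c, hab, hac, hbc, ha, hb, hc'⟩ :=
    exists_three_simple_nbrs hc fun u => Nat.lt_succ_iff.1 (hmulti u)
  have hne : ∀ {u}, G.mult v u = 1 → v ≠ u := by rintro u h rfl; simp [G.loopless] at h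
  obtain ⟨q, r, h⟩ : ∃ q r, G.IsTriangle v q r := by
    by_contra! hno
    refine hclaw ⟨v, a, b, c, hne ha, hne hb, hne hc', hab, hac, hbc, ha, hb, hc', ?_, ?_, ?_⟩
    · by_contra h; exact hno _ _ (isTriangle_of_mult_ne_zero hc hT hab ha hb h)
    · by_contra h; exact hno _ _ (isTriangle_of_mult_ne_zero hc hT hac ha hc' h)
    · by_contra h; exact hno _ _ (isTriangle_of_mult_ne_zero hc hT hbc hb hc' h)
  obtain ⟨s, hs, hsub⟩ := h.exists_mem_blockSets
  exact ⟨s, hs, hsub (by simp)⟩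

end Blocks

section Counting

variable [DecidableEq V]

lemma sum_sum_eq_sum_blocks {α M : Type*} [Fintype α] [DecidableEq α] [AddCommMonoid M]
    {P : Finset (Finset α)} (hdisj : ∀ s ∈ P, ∀ t ∈ P, s ≠ t → Disjoint s t)
    (hcov : P.biUnion id = univ) {f : α → α → M} (hf : ∀ s ∈ P, ∀ u ∈ s, ∀ v ∉ s, f u v = 0) :
    ∑ u, ∑ v, f u v = ∑ s ∈ P, ∑ u ∈ s, ∑ v ∈ s, f u v :=
  calc ∑ u, ∑ v, f u v = ∑ u ∈ P.biUnion id, ∑ v, f u v := by rw [hcov]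
    _ = ∑ s ∈ P, ∑ u ∈ s, ∑ v, f u v := sum_biUnion hdisj
    _ = ∑ s ∈ P, ∑ u ∈ s, ∑ v ∈ s, f u v := sum_congr rfl fun s hs => sum_congr rfl fun u hu =>
          (sum_subset (subset_univ s) fun v _ hv => hf s hs u hu v hv).symm

lemma even_sum_sum_mult (G : Multigraph V) (s : Finset V) :
    Even (∑ u ∈ s, ∑ v ∈ s, G.mult u v) := by
  induction s using Finset.induction_on with
  | empty => simp
  | insert x s hx ih =>
    have hsymm : ∑ u ∈ s, G.mult u x = ∑ v ∈ s, G.mult x v := sum_congr rfl fun u _ => G.symm u x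
    simp only [sum_insert hx, sum_add_distrib, G.loopless, hsymm]
    obtain ⟨k, hk⟩ := ih
    exact ⟨∑ v ∈ s, G.mult x v + k, by omega⟩

def monoMult (G : Multigraph V) (B : Finset V) (u v : V) : ℕ :=
  if (u ∈ B ↔ v ∈ B) then G.mult u v else 0

variable [Fintype V]

lemma monoMult_compl (G : Multigraph V) (B : Finset V) : G.monoMult Bᶜ = G.monoMult B := by
  ext u v
  simp only [monoMult, mem_compl, not_iff_not]

lemma sum_monoMult_of_mem {B : Finset V} {u : V} (hu : u ∈ B) :
    ∑ v, G.monoMult B u v = ∑ v ∈ B, G.mult u v := by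
  have hzero : ∑ v ∈ Bᶜ, G.monoMult B u v = 0 :=
    sum_eq_zero fun v hv => if_neg fun h => mem_compl.1 hv (h.1 hu)
  rw [← sum_add_sum_compl B, hzero, add_zero]
  exact sum_congr rfl fun v hv => if_pos (iff_of_true hu hv)

lemma two_mul_epsilon (G : Multigraph V) (B : Finset V) :
    2 * G.epsilon B = ∑ u, ∑ v, G.monoMult B u v := by
  rw [epsilon, monoEdges, monoEdges, mul_add, Nat.two_mul_div_two_of_even (even_sum_sum_mult G B),
    Nat.two_mul_div_two_of_even (even_sum_sum_mult G Bᶜ), ← sum_add_sum_compl B]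
  congr 1
  · exact sum_congr rfl fun u hu => (sum_monoMult_of_mem hu).symm
  · exact sum_congr rfl fun u hu => by rw [← monoMult_compl, sum_monoMult_of_mem hu]

lemma IsTriangle.sum_monoMult {B : Finset V} (hdes : G.IsDesired B) {a b c : V}
    (h : G.IsTriangle a b c) :
    ∑ u ∈ {a, b, c}, ∑ v ∈ {a, b, c}, G.monoMult B u v = 2 := by
  have h1 := hdes.2.1 a b c h
  obtain ⟨hab, hac, hbc, mab, mac, mbc⟩ := h
  rw [card_filter] at h1
  simp only [sum_insert, mem_insert, mem_singleton, Prod.mk.injEq, hab, hac, hbc, false_and,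
    and_false, or_self, not_false_eq_true, sum_singleton, monoMult, G.loopless, mab, mac, mbc,
    G.symm b a, G.symm c a, G.symm c b] at h1 ⊢
  by_cases ha : a ∈ B <;> by_cases hb : b ∈ B <;> by_cases hc : c ∈ B <;> simp [ha, hb, hc] at h1 ⊢

lemma IsDiamond.sum_monoMult {B : Finset V} (hdes : G.IsDesired B) {a b c d : V}
    (h : G.IsDiamond a b c d) :
    ∑ u ∈ {a, b, c, d}, ∑ v ∈ {a, b, c, d}, G.monoMult B u v = 2 := by
  have h1 := hdes.2.2.2.1 a b c d h
  obtain ⟨hab, hac, had, hbc, hbd, hcd, mad, mab, mac, mbc, mbd, mcd⟩ := h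
  rw [card_filter] at h1
  simp only [sum_insert, mem_insert, mem_singleton, Prod.mk.injEq, hab, hac, had, hbc, hbd, hcd,
    false_and, and_false, or_self, not_false_eq_true, sum_singleton, monoMult, G.loopless,
    mad, mab, mac, mbc, mbd, mcd, G.symm d a, G.symm b a, G.symm c a, G.symm c b, G.symm d b,
    G.symm d c] at h1 ⊢
  by_cases ha : a ∈ B <;> by_cases hb : b ∈ B <;> by_cases hc : c ∈ B <;> by_cases hd : d ∈ B <;>
    simp [ha, hb, hc, hd] at h1 ⊢

lemma IsDigon.sum_monoMult {B : Finset V} (hdes : G.IsDesired B) {u v : V} (h : G.IsDigon u v) :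
    ∑ x ∈ {u, v}, ∑ y ∈ {u, v}, G.monoMult B x y = 0 := by
  have hsplit := hdes.2.2.2.2 u v h.2
  simp [sum_pair h.1, monoMult, G.loopless, hsplit, Iff.comm.not.1 hsplit]

end Counting

section Partition

variable [Fintype V] [DecidableEq V]

noncomputable def diamonds (G : Multigraph V) : Finset (Finset V) :=
  (Set.toFinite G.diamondSets).toFinset

noncomputable def bareTriangles (G : Multigraph V) : Finset (Finset V) :=
  (Set.toFinite G.bareTriangleSets).toFinset

noncomputable def digons (G : Multigraph V) : Finset (Finset V) :=
  (Set.toFinite G.digonSets).toFinset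

noncomputable def blocks (G : Multigraph V) : Finset (Finset V) :=
  G.diamonds ∪ G.bareTriangles ∪ G.digons

lemma mem_blocks {s : Finset V} : s ∈ G.blocks ↔ s ∈ G.blockSets := by
  simp only [blocks, blockSets, diamonds, bareTriangles, digons, mem_union,
    Set.Finite.mem_toFinset, Set.mem_union]

lemma sum_blocks {M : Type*} [AddCommMonoid M] (f : Finset V → M) :
    ∑ s ∈ G.blocks, f s =
      ∑ s ∈ G.diamonds, f s + ∑ s ∈ G.bareTriangles, f s + ∑ s ∈ G.digons, f s := by
  have hdt : Disjoint G.diamonds G.bareTriangles := disjoint_left.2 fun s hd ht =>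
    ((Set.Finite.mem_toFinset _).1 ht).2 s ((Set.Finite.mem_toFinset _).1 hd) subset_rfl
  have hdg : Disjoint (G.diamonds ∪ G.bareTriangles) G.digons := disjoint_left.2 fun s hs hg => by
    obtain ⟨u, v, rfl, h, -⟩ := (Set.Finite.mem_toFinset _).1 hg
    rcases mem_union.1 hs with hs | hs
    · obtain ⟨a, b, c, d, heq, h'⟩ := (Set.Finite.mem_toFinset _).1 hs
      have := heq ▸ h'.card_eq
      rw [card_pair h.1] at this
      omega
    · obtain ⟨⟨a, b, c, heq, h'⟩, -⟩ := (Set.Finite.mem_toFinset _).1 hs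
      have := heq ▸ h'.card_eq
      rw [card_pair h.1] at this
      omega
  rw [blocks, sum_union hdg, sum_union hdt]

lemma blocks_pairwiseDisjoint (hconn : G.Connected) (hc : G.IsCubic) (hK4 : ¬ G.IsK4) :
    ∀ s ∈ G.blocks, ∀ t ∈ G.blocks, s ≠ t → Disjoint s t := fun _ hs _ ht hne =>
  disjoint_left.2 fun _ hvs hvt =>
    hne (eq_of_mem_blockSets hconn hc hK4 (mem_blocks.1 hs) (mem_blocks.1 ht) hvs hvt)

lemma biUnion_blocks (hclaw : G.IsClawFree) (hc : G.IsCubic)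
    (hT : ∀ a b c, ¬ G.IsTrumpet a b c) : G.blocks.biUnion id = univ :=
  eq_univ_iff_forall.2 fun v =>
    let ⟨s, hs, hv⟩ := exists_mem_blockSets hclaw hc hT v
    mem_biUnion.2 ⟨s, mem_blocks.2 hs, hv⟩

lemma monoMult_eq_zero_of_mem_blocks (hconn : G.Connected) (hc : G.IsCubic) (hK4 : ¬ G.IsK4)
    {B : Finset V} (hdes : G.IsDesired B) {s : Finset V} (hs : s ∈ G.blocks) {u v : V}
    (hu : u ∈ s) (hv : v ∉ s) : G.monoMult B u v = 0 := by
  by_contra hne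
  unfold monoMult at hne
  split_ifs at hne with hsame
  · have huv : u ≠ v := by rintro rfl; exact hv hu
    obtain ⟨w, hw⟩ := hdes.2.2.1 u v ⟨huv, Nat.pos_of_ne_zero hne⟩ hsame
    obtain ⟨t, ht, hsub⟩ := hw.exists_mem_blockSets
    have hts := eq_of_mem_blockSets hconn hc hK4 ht (mem_blocks.1 hs) (hsub (by simp)) hu
    exact hv (hts ▸ hsub (by simp))
  · exact hne rfl

theorem three_mul_epsilon_add_diamondCount_add_two_mul_digonCount (hconn : G.Connected)
    (hclaw : G.IsClawFree) (hc : G.IsCubic) (hK4 : ¬ G.IsK4) {B : Finset V}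
    (hdes : G.IsDesired B) :
    3 * G.epsilon B + G.diamondCount + 2 * G.digonCount = Fintype.card V := by
  have hnT := hdes.not_isTrumpet hc
  have hD : ∀ s ∈ G.diamonds, s.card = 4 ∧ ∑ u ∈ s, ∑ v ∈ s, G.monoMult B u v = 2 :=
    fun s hs => by
      obtain ⟨a, b, c, d, rfl, h⟩ := (Set.Finite.mem_toFinset _).1 hs
      exact ⟨h.card_eq, h.sum_monoMult hdes⟩
  have hT : ∀ s ∈ G.bareTriangles, s.card = 3 ∧ ∑ u ∈ s, ∑ v ∈ s, G.monoMult B u v = 2 :=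
    fun s hs => by
      obtain ⟨⟨a, b, c, rfl, h⟩, -⟩ := (Set.Finite.mem_toFinset _).1 hs
      exact ⟨h.card_eq, h.sum_monoMult hdes⟩
  have hG : ∀ s ∈ G.digons, s.card = 2 ∧ ∑ u ∈ s, ∑ v ∈ s, G.monoMult B u v = 0 :=
    fun s hs => by
      obtain ⟨u, v, rfl, h, -⟩ := (Set.Finite.mem_toFinset _).1 hs
      exact ⟨card_pair h.1, h.sum_monoMult hdes⟩
  have hV : Fintype.card V = 4 * #G.diamonds + 3 * #G.bareTriangles + 2 * #G.digons := by
    rw [← card_univ, ← biUnion_blocks hclaw hc hnT,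
      card_biUnion (t := id) (blocks_pairwiseDisjoint hconn hc hK4), sum_blocks]
    simp only [id]
    rw [sum_const_nat fun s hs => (hD s hs).1, sum_const_nat fun s hs => (hT s hs).1,
      sum_const_nat fun s hs => (hG s hs).1]
    ring
  have hε : 2 * G.epsilon B = 2 * #G.diamonds + 2 * #G.bareTriangles := by
    rw [two_mul_epsilon, sum_sum_eq_sum_blocks (blocks_pairwiseDisjoint hconn hc hK4)
      (biUnion_blocks hclaw hc hnT) fun s hs u hu v hv =>
        monoMult_eq_zero_of_mem_blocks hconn hc hK4 hdes hs hu hv, sum_blocks,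
      sum_const_nat fun s hs => (hD s hs).2, sum_const_nat fun s hs => (hT s hs).2,
      sum_const_nat fun s hs => (hG s hs).2]
    ring
  have hk : G.diamondCount = #G.diamonds := Set.ncard_eq_toFinset_card _ _
  have hp : G.digonCount = #G.digons := Set.ncard_eq_toFinset_card _ _
  omega

end Partition

end Multigraph

/-- For a desired bisection of a connected claw-free cubic multigraph `G`
(not `K₄`), `V(G)` partitions into diamonds, triangles, trumpets and digons, and the
number of monochromatic edges `ε` satisfies `3ε + k + 2p = |V(G)|` (i.e.
`ε = k + (|V| - 4k - 2p)/3 = (|V| - k - 2p)/3`). -/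
theorem stmt16 {V : Type*} [Fintype V] [DecidableEq V] (G : Multigraph V)
    (hconn : G.Connected) (hclaw : G.IsClawFree) (hcubic : G.IsCubic)
    (hK4 : ¬ G.IsK4) (B : Finset V) (hdes : G.IsDesired B) :
    (∃ P : Finset (Finset V),
      (∀ s ∈ P, ∀ t ∈ P, s ≠ t → Disjoint s t) ∧
      P.biUnion id = Finset.univ ∧
      (∀ s ∈ P, (∃ a b c d, s = {a, b, c, d} ∧ G.IsDiamond a b c d) ∨
        (∃ a b c, s = {a, b, c} ∧ G.IsTriangle a b c) ∨
        (∃ a b c, s = {a, b, c} ∧ G.IsTrumpet a b c) ∨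
        (∃ u v, s = {u, v} ∧ G.IsDigon u v))) ∧
    3 * G.epsilon B + G.diamondCount + 2 * G.digonCount = Fintype.card V := by
  open Multigraph in
  have hT := hdes.not_isTrumpet hcubic
  refine ⟨⟨G.blocks, blocks_pairwiseDisjoint hconn hcubic hK4, biUnion_blocks hclaw hcubic hT,
    fun s hs => ?_⟩,
    three_mul_epsilon_add_diamondCount_add_two_mul_digonCount hconn hclaw hcubic hK4 hdes⟩
  rcases mem_blocks.1 hs with (hs | ⟨hs, -⟩) | ⟨u, v, rfl, h, -⟩
  · exact Or.inl hs
  · exact Or.inr (Or.inl hs)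
  · exact Or.inr (Or.inr (Or.inr ⟨u, v, rfl, h⟩))
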